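/- Let $\mu$ be a probability measure (the true prior) and $\nu$ a probability measure (the false prior) on a standard Borel space $\mathbf{X}$, with $\mu \ll \nu$. Let the measurement channel have density $h(x, \mathbf{y})$ with respect to a reference measure $\psi$ on $\mathbf{Y}$ (so $Q(dy|x) = h(x,y)\psi(dy)$) and let $\tau(dx' \mid x, u)$ be a transition kernel. Define the one-step predictor update $F(\pi, u, y)(A) = \frac{\int_A \tau(dx' \mid x, u)\, h(x,y)\, \pi(dx)}{\int h(x,y)\, \pi(dx)}$ whenever the denominator is nonzero. Then the expected total variation distance of the updated predictors, where the expectation over $y$ is taken under the measurement distribution induced by the true prior $\mu$, satisfies $E^\mu[\|F(\mu, u, y) - F(\nu, u, y)\|_{TV}] \leq (2 - \delta(Q))\|\mu - \nu\|_{TV}$, where $\delta(Q)$ is the Dobrushin coefficient of the measurement channel $Q$. -/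

import Mathlib

open MeasureTheory ProbabilityTheory

/-- Total variation distance between two measures: `‖μ-ν‖_TV = 2 sup_B |μ(B)-ν(B)|`. -/
noncomputable def tv {X : Type*} [MeasurableSpace X] (μ ν : Measure X) : ℝ :=
  2 * ⨆ B : Set X, |(μ B).toReal - (ν B).toReal|

/-- Action of a kernel on a measure: `K(μ)(A) = ∫ K(x,A) μ(dx)`. -/
noncomputable def kApply {X Y : Type*} [MeasurableSpace X] [MeasurableSpace Y]
    (K : Kernel X Y) (μ : Measure X) : Measure Y :=
  μ.bind (fun x => K x)

/-- The contraction coefficient `α(K) = sup_{μ ≠ ν} ‖K(μ)-K(ν)‖_TV / ‖μ-ν‖_TV`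
(with the convention `0/0 = 0`, so pairs with `μ = ν` contribute `0`). -/
noncomputable def alphaK {X Y : Type*} [MeasurableSpace X] [MeasurableSpace Y]
    (K : Kernel X Y) : ℝ :=
  ⨆ p : ProbabilityMeasure X × ProbabilityMeasure X,
    tv (kApply K (p.1 : Measure X)) (kApply K (p.2 : Measure X)) /
      tv (p.1 : Measure X) (p.2 : Measure X)


open scoped ENNReal

/-- The Dobrushin coefficient `δ(K) = 1 - α(K)`. -/
noncomputable def dobrushin {X Y : Type*} [MeasurableSpace X] [MeasurableSpace Y]
    (K : Kernel X Y) : ℝ :=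
  1 - alphaK K

/-- The one-step predictor update
`F(π,u,y)(A) = (∫_A τ(dx' ∣ x,u) h(x,y) π(dx)) / (∫ h(x,y) π(dx))`
(equal to the zero measure when the denominator vanishes, via `0⁻¹`-junk in `ℝ≥0∞`). -/
noncomputable def predUpdate {X U Y : Type*} [MeasurableSpace X] [MeasurableSpace U]
    [MeasurableSpace Y] (τ : Kernel (X × U) X) (h : X → Y → ℝ≥0∞)
    (π : Measure X) (u : U) (y : Y) : Measure X :=
  ((π.withDensity fun x => h x y) Set.univ)⁻¹ •
    ((π.withDensity fun x => h x y).bind fun x => τ (x, u))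

section TVBasic
variable {Z : Type*} [MeasurableSpace Z]

lemma tv_nonneg (P P' : Measure Z) : 0 ≤ tv P P' := by
  have h : 0 ≤ ⨆ B : Set Z, |(P B).toReal - (P' B).toReal| :=
    Real.iSup_nonneg fun B => abs_nonneg _
  unfold tv; linarith

lemma abs_diff_le_one (P P' : Measure Z) [IsProbabilityMeasure P] [IsProbabilityMeasure P']
    (B : Set Z) : |(P B).toReal - (P' B).toReal| ≤ 1 := by
  have h1 : (P B).toReal ≤ 1 := by
    have h := ENNReal.toReal_mono (by simp : (P Set.univ) ≠ ∞)
      (measure_mono (Set.subset_univ B))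
    simpa [measure_univ] using h
  have h2 : (P' B).toReal ≤ 1 := by
    have h := ENNReal.toReal_mono (by simp : (P' Set.univ) ≠ ∞)
      (measure_mono (Set.subset_univ B))
    simpa [measure_univ] using h
  have h3 : 0 ≤ (P B).toReal := ENNReal.toReal_nonneg
  have h4 : 0 ≤ (P' B).toReal := ENNReal.toReal_nonneg
  rw [abs_sub_le_iff]; constructor <;> linarith

lemma bddAbove_absdiff (P P' : Measure Z) [IsProbabilityMeasure P] [IsProbabilityMeasure P'] :
    BddAbove (Set.range fun B : Set Z => |(P B).toReal - (P' B).toReal|) := by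
  refine ⟨1, ?_⟩; rintro x ⟨B, rfl⟩; exact abs_diff_le_one P P' B

lemma two_absdiff_le_tv (P P' : Measure Z) [IsProbabilityMeasure P] [IsProbabilityMeasure P']
    (B : Set Z) : 2 * |(P B).toReal - (P' B).toReal| ≤ tv P P' := by
  have h := le_ciSup (bddAbove_absdiff P P') B
  unfold tv; linarith

lemma diff_le_of_meas {P P' : Measure Z} [IsFiniteMeasure P] [IsFiniteMeasure P'] {c : ℝ}
    (H : ∀ B : Set Z, MeasurableSet B → (P B).toReal - (P' B).toReal ≤ c) (B : Set Z) :
    (P B).toReal - (P' B).toReal ≤ c := by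
  have h1 : (P B).toReal ≤ (P (toMeasurable P' B)).toReal :=
    ENNReal.toReal_mono (measure_ne_top _ _) (measure_mono (subset_toMeasurable _ _))
  have h2 : (P' (toMeasurable P' B)).toReal = (P' B).toReal := by rw [measure_toMeasurable]
  have h3 := H _ (measurableSet_toMeasurable P' B)
  linarith

lemma abs_diff_le_of_meas {P P' : Measure Z} [IsFiniteMeasure P] [IsFiniteMeasure P'] {c : ℝ}
    (H : ∀ B : Set Z, MeasurableSet B → |(P B).toReal - (P' B).toReal| ≤ c) (B : Set Z) :
    |(P B).toReal - (P' B).toReal| ≤ c := by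
  rw [abs_sub_le_iff]
  constructor
  · exact diff_le_of_meas (fun B hB => (abs_sub_le_iff.1 (H B hB)).1) B
  · exact diff_le_of_meas (fun B hB => (abs_sub_le_iff.1 (H B hB)).2) B

lemma tv_le_of_meas {P P' : Measure Z} [IsFiniteMeasure P] [IsFiniteMeasure P'] {c : ℝ}
    (H : ∀ B : Set Z, MeasurableSet B → |(P B).toReal - (P' B).toReal| ≤ c) :
    tv P P' ≤ 2 * c := by
  have h : ∀ B : Set Z, |(P B).toReal - (P' B).toReal| ≤ c := abs_diff_le_of_meas H
  have h2 : (⨆ B : Set Z, |(P B).toReal - (P' B).toReal|) ≤ c := ciSup_le h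
  unfold tv; linarith

end TVBasic

section TVGE
variable {Z : Type*} [MeasurableSpace Z]

/-- If on all measurable subsets of `G` the probability measures `P, P'` are given by densities
`p, q` w.r.t. `ψ`, then `∫_G |p - q| ≤ tv P P'`. -/
lemma tv_ge_density (ψ : Measure Z) (p q : Z → ℝ≥0∞) (hp : Measurable p) (hq : Measurable q)
    (P P' : Measure Z) [IsProbabilityMeasure P] [IsProbabilityMeasure P']
    {G : Set Z} (hG : MeasurableSet G)
    (hPB : ∀ B : Set Z, MeasurableSet B → B ⊆ G → P B = ∫⁻ z in B, p z ∂ψ)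
    (hP'B : ∀ B : Set Z, MeasurableSet B → B ⊆ G → P' B = ∫⁻ z in B, q z ∂ψ) :
    (∫⁻ z in G, ((p z - q z) + (q z - p z)) ∂ψ).toReal ≤ tv P P' := by
  set B₁ : Set Z := {z | q z < p z} ∩ G with hB₁def
  set B₂ : Set Z := {z | p z < q z} ∩ G with hB₂def
  have hB₁ : MeasurableSet B₁ := (measurableSet_lt hq hp).inter hG
  have hB₂ : MeasurableSet B₂ := (measurableSet_lt hp hq).inter hG
  -- ∫_G (p - q) = ∫_{B₁} (p - q)
  have hsplit1 : ∫⁻ z in G, (p z - q z) ∂ψ = ∫⁻ z in B₁, (p z - q z) ∂ψ := by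
    rw [hB₁def, ← Measure.restrict_restrict (measurableSet_lt hq hp)]
    rw [← lintegral_indicator (measurableSet_lt hq hp)]
    refine lintegral_congr fun z => ?_
    by_cases h : q z < p z
    · exact (Set.indicator_of_mem (show z ∈ {a | q a < p a} from h) (fun z => p z - q z)).symm
    · rw [Set.indicator_of_notMem (show z ∉ {a | q a < p a} from h),
        tsub_eq_zero_of_le (not_lt.1 h)]
  have hsplit2 : ∫⁻ z in G, (q z - p z) ∂ψ = ∫⁻ z in B₂, (q z - p z) ∂ψ := by
    rw [hB₂def, ← Measure.restrict_restrict (measurableSet_lt hp hq)]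
    rw [← lintegral_indicator (measurableSet_lt hp hq)]
    refine lintegral_congr fun z => ?_
    by_cases h : p z < q z
    · exact (Set.indicator_of_mem (show z ∈ {a | p a < q a} from h) (fun z => q z - p z)).symm
    · rw [Set.indicator_of_notMem (show z ∉ {a | p a < q a} from h),
        tsub_eq_zero_of_le (not_lt.1 h)]
  -- the two pieces are measure differences
  have key1 : ∫⁻ z in B₁, (p z - q z) ∂ψ = P B₁ - P' B₁ := by
    rw [hPB B₁ hB₁ Set.inter_subset_right, hP'B B₁ hB₁ Set.inter_subset_right]
    refine lintegral_sub hq ?_ ?_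
    · rw [← hP'B B₁ hB₁ Set.inter_subset_right]; exact (measure_lt_top P' B₁).ne
    · refine (ae_restrict_iff' hB₁).2 (ae_of_all _ fun z hz => ?_)
      exact le_of_lt hz.1
  have key2 : ∫⁻ z in B₂, (q z - p z) ∂ψ = P' B₂ - P B₂ := by
    rw [hPB B₂ hB₂ Set.inter_subset_right, hP'B B₂ hB₂ Set.inter_subset_right]
    refine lintegral_sub hp ?_ ?_
    · rw [← hPB B₂ hB₂ Set.inter_subset_right]; exact (measure_lt_top P B₂).ne
    · refine (ae_restrict_iff' hB₂).2 (ae_of_all _ fun z hz => ?_)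
      exact le_of_lt hz.1
  have hle1 : P' B₁ ≤ P B₁ := by
    rw [hPB B₁ hB₁ Set.inter_subset_right, hP'B B₁ hB₁ Set.inter_subset_right]
    refine setLIntegral_mono' hB₁ fun z hz => le_of_lt hz.1
  have hle2 : P B₂ ≤ P' B₂ := by
    rw [hPB B₂ hB₂ Set.inter_subset_right, hP'B B₂ hB₂ Set.inter_subset_right]
    refine setLIntegral_mono' hB₂ fun z hz => le_of_lt hz.1
  have t1 : (∫⁻ z in B₁, (p z - q z) ∂ψ).toReal = (P B₁).toReal - (P' B₁).toReal := by
    rw [key1, ENNReal.toReal_sub_of_le hle1 (measure_ne_top P B₁)]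
  have t2 : (∫⁻ z in B₂, (q z - p z) ∂ψ).toReal = (P' B₂).toReal - (P B₂).toReal := by
    rw [key2, ENNReal.toReal_sub_of_le hle2 (measure_ne_top P' B₂)]
  have hadd : ∫⁻ z in G, ((p z - q z) + (q z - p z)) ∂ψ
      = (∫⁻ z in B₁, (p z - q z) ∂ψ) + (∫⁻ z in B₂, (q z - p z) ∂ψ) := by
    rw [lintegral_add_left (f := fun z => p z - q z) (hp.sub hq), hsplit1, hsplit2]
  have hfin1 : ∫⁻ z in B₁, (p z - q z) ∂ψ ≠ ∞ := by
    rw [key1]; exact (tsub_le_self.trans_lt (measure_lt_top P B₁)).ne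
  have hfin2 : ∫⁻ z in B₂, (q z - p z) ∂ψ ≠ ∞ := by
    rw [key2]; exact (tsub_le_self.trans_lt (measure_lt_top P' B₂)).ne
  have habs1 : (P B₁).toReal - (P' B₁).toReal ≤ tv P P' / 2 := by
    have := two_absdiff_le_tv P P' B₁
    have := le_abs_self ((P B₁).toReal - (P' B₁).toReal)
    linarith
  have habs2 : (P' B₂).toReal - (P B₂).toReal ≤ tv P P' / 2 := by
    have := two_absdiff_le_tv P P' B₂
    have := neg_abs_le ((P B₂).toReal - (P' B₂).toReal)
    linarith
  rw [hadd, ENNReal.toReal_add hfin1 hfin2, t1, t2]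
  linarith

end TVGE

section EPoint
variable {a b c : ℝ≥0∞}

private lemma mul_split_ge (hc : 1 ≤ c) (a : ℝ≥0∞) : c * a = a + (c - 1) * a := by
  calc c * a = (1 + (c - 1)) * a := by rw [add_tsub_cancel_of_le hc]
    _ = 1 * a + (c - 1) * a := add_mul _ _ _
    _ = a + (c - 1) * a := by rw [one_mul]

private lemma mul_split_le (hc : c ≤ 1) (a : ℝ≥0∞) : a = c * a + (1 - c) * a := by
  calc a = 1 * a := (one_mul a).symm
    _ = (c + (1 - c)) * a := by rw [add_tsub_cancel_of_le hc]
    _ = c * a + (1 - c) * a := add_mul _ _ _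

lemma el1 (hab : a ≤ b) (hb : b ≠ ∞) : c * a ≤ a + (c * b - b) := by
  rcases le_total 1 c with hc | hc
  · calc c * a = a + (c - 1) * a := mul_split_ge hc a
      _ ≤ a + (c - 1) * b := add_le_add_right (mul_le_mul_right hab _) a
      _ ≤ a + (c * b - b) := by
          refine add_le_add_right (ENNReal.le_sub_of_add_le_left hb (le_of_eq ?_)) a
          exact (mul_split_ge hc b).symm
  · exact le_trans (mul_le_of_le_one_left zero_le hc) (self_le_add_right a _)

lemma el2 (hab : a ≤ b) (hb : b ≠ ∞) : a ≤ c * a + (b - c * b) := by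
  rcases le_total 1 c with hc | hc
  · exact le_trans (le_mul_of_one_le_left zero_le hc) (self_le_add_right _ _)
  · have hcb : c * b ≠ ∞ := by
      exact ne_top_of_le_ne_top hb (mul_le_of_le_one_left zero_le hc)
    calc a = c * a + (1 - c) * a := mul_split_le hc a
      _ ≤ c * a + (1 - c) * b := add_le_add_right (mul_le_mul_right hab _) _
      _ ≤ c * a + (b - c * b) := by
          refine add_le_add_right (ENNReal.le_sub_of_add_le_left hcb (le_of_eq ?_)) _
          exact (mul_split_le hc b).symm

lemma el3 (hab : a ≤ b) : c * a + b ≤ a + c * b + (b - c * b) := by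
  rcases le_total 1 c with hc | hc
  · calc c * a + b = a + (c - 1) * a + b := by rw [← mul_split_ge hc]
      _ ≤ a + (c - 1) * b + b := add_le_add_left (add_le_add_right (mul_le_mul_right hab _) a) b
      _ = a + c * b := by rw [add_assoc, add_comm ((c - 1) * b) b, ← mul_split_ge hc]
      _ ≤ a + c * b + (b - c * b) := self_le_add_right _ _
  · have h1 : c * a ≤ a := mul_le_of_le_one_left zero_le hc
    have h2 : b ≤ c * b + (b - c * b) := le_add_tsub
    calc c * a + b ≤ a + (c * b + (b - c * b)) := add_le_add h1 h2
      _ = a + c * b + (b - c * b) := by rw [add_assoc]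

lemma el4 (hab : a ≤ b) : a + c * b ≤ c * a + b + (c * b - b) := by
  rcases le_total 1 c with hc | hc
  · have h1 : a ≤ c * a := le_mul_of_one_le_left zero_le hc
    have h2 : c * b ≤ b + (c * b - b) := le_add_tsub
    calc a + c * b ≤ c * a + (b + (c * b - b)) := add_le_add h1 h2
      _ = c * a + b + (c * b - b) := by rw [add_assoc]
  · calc a + c * b = c * a + (1 - c) * a + c * b := by rw [← mul_split_le hc]
      _ ≤ c * a + (1 - c) * b + c * b := by
          exact add_le_add_left (add_le_add_right (mul_le_mul_right hab _) _) _
      _ = c * a + b := by rw [add_assoc, add_comm ((1 - c) * b) (c * b), ← mul_split_le hc]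
      _ ≤ c * a + b + (c * b - b) := self_le_add_right _ _

lemma emax (a b : ℝ≥0∞) : a + (b - a) = b + (a - b) := by
  rcases le_total a b with h | h
  · rw [add_tsub_cancel_of_le h, tsub_eq_zero_of_le h, add_zero]
  · rw [add_tsub_cancel_of_le h, tsub_eq_zero_of_le h, add_zero]

lemma eabs1 (a c : ℝ≥0∞) : c * a - a ≤ (c - 1) * a := by
  rcases le_total 1 c with hc | hc
  · exact tsub_le_iff_right.2 (le_of_eq (by rw [add_comm, ← mul_split_ge hc]))
  · rw [tsub_eq_zero_of_le (mul_le_of_le_one_left zero_le hc)]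
    exact zero_le

lemma eabs2 (a c : ℝ≥0∞) : a - c * a ≤ (1 - c) * a := by
  rcases le_total 1 c with hc | hc
  · rw [tsub_eq_zero_of_le (le_mul_of_one_le_left zero_le hc)]
    exact zero_le
  · exact tsub_le_iff_right.2 (le_of_eq (by rw [add_comm, ← mul_split_le hc]))

end EPoint

/-- Pure real arithmetic core for the per-set bound. -/
lemma real_core {a b p q U V : ℝ} (hp : 0 < p) (hq : 0 < q)
    (hb0 : 0 ≤ b) (hbq : b ≤ q) (hU : 0 ≤ U) (hV : 0 ≤ V)
    (r1 : a ≤ b + U) (r2 : b ≤ a + V) (r3 : a + q ≤ b + p + V) (r4 : b + p ≤ a + q + U) :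
    |p⁻¹ * a - q⁻¹ * b| ≤ (U + V + |p - q|) / (2 * p) := by
  have hceq : p⁻¹ * a - q⁻¹ * b = (a - b - (b / q) * (p - q)) / p := by
    field_simp
    ring
  set c : ℝ := b / q with hcdef
  have hc0 : 0 ≤ c := div_nonneg hb0 (le_of_lt hq)
  have hc1 : c ≤ 1 := (div_le_one hq).2 hbq
  have hinner : |a - b - c * (p - q)| ≤ (U + V + |p - q|) / 2 := by
    rcases le_total q p with hpq | hpq
    · have habs : |p - q| = p - q := abs_of_nonneg (by linarith)
      have hcp1 : 0 ≤ c * (p - q) := mul_nonneg hc0 (by linarith)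
      have hcp2 : c * (p - q) ≤ p - q := by nlinarith
      rw [habs, abs_le]
      constructor <;> nlinarith
    · have habs : |p - q| = q - p := by rw [abs_of_nonpos (by linarith), neg_sub]
      have hcp1 : c * (p - q) ≤ 0 := mul_nonpos_of_nonneg_of_nonpos hc0 (by linarith)
      have hcp2 : p - q ≤ c * (p - q) := by nlinarith
      rw [habs, abs_le]
      constructor <;> nlinarith
  rw [hceq, abs_div, abs_of_pos hp, show (U + V + |p - q|) / (2 * p)
    = ((U + V + |p - q|) / 2) / p by rw [div_div]]
  gcongr

section DP
variable {X Y : Type*} [MeasurableSpace X] [MeasurableSpace Y]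

lemma isProbabilityMeasure_bind (P : Measure X) [IsProbabilityMeasure P]
    (k : X → Measure Y) (hk : Measurable k) (hkp : ∀ x, IsProbabilityMeasure (k x)) :
    IsProbabilityMeasure (P.bind k) := by
  constructor
  rw [Measure.bind_apply MeasurableSet.univ hk.aemeasurable]
  have : ∀ x, k x Set.univ = 1 := fun x => (hkp x).measure_univ
  simp [this]

/-- Data processing inequality for tv. -/
lemma tv_bind_le (P₁ P₂ : Measure X) [IsProbabilityMeasure P₁] [IsProbabilityMeasure P₂]
    (k : X → Measure Y) (hk : Measurable k) (hkp : ∀ x, IsProbabilityMeasure (k x)) :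
    tv (P₁.bind k) (P₂.bind k) ≤ tv P₁ P₂ := by
  haveI h1 : IsProbabilityMeasure (P₁.bind k) := isProbabilityMeasure_bind P₁ k hk hkp
  haveI h2 : IsProbabilityMeasure (P₂.bind k) := isProbabilityMeasure_bind P₂ k hk hkp
  set ρ : Measure X := P₁ + P₂ with hρ
  set f : X → ℝ≥0∞ := P₁.rnDeriv ρ with hfdef
  set g : X → ℝ≥0∞ := P₂.rnDeriv ρ with hgdef
  have hf : Measurable f := Measure.measurable_rnDeriv _ _
  have hg : Measurable g := Measure.measurable_rnDeriv _ _
  have hac1 : P₁ ≪ ρ := fun s hs => by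
    rw [hρ] at hs; simp only [Measure.add_apply, add_eq_zero] at hs; exact hs.1
  have hac2 : P₂ ≪ ρ := fun s hs => by
    rw [hρ] at hs; simp only [Measure.add_apply, add_eq_zero] at hs; exact hs.2
  have hP₁ : ρ.withDensity f = P₁ := Measure.withDensity_rnDeriv_eq _ _ hac1
  have hP₂ : ρ.withDensity g = P₂ := Measure.withDensity_rnDeriv_eq _ _ hac2
  have hIf : ∫⁻ x, f x ∂ρ = 1 := by
    have := congrArg (fun m : Measure X => m Set.univ) hP₁
    simpa [withDensity_apply _ MeasurableSet.univ] using this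
  have hIg : ∫⁻ x, g x ∂ρ = 1 := by
    have := congrArg (fun m : Measure X => m Set.univ) hP₂
    simpa [withDensity_apply _ MeasurableSet.univ] using this
  set A₁ : ℝ≥0∞ := ∫⁻ x, (f x - g x) ∂ρ with hA₁
  set A₂ : ℝ≥0∞ := ∫⁻ x, (g x - f x) ∂ρ with hA₂
  have hA₁fin : A₁ ≠ ∞ := by
    refine ne_of_lt (lt_of_le_of_lt (lintegral_mono fun x => tsub_le_self) ?_)
    rw [hIf]; exact ENNReal.one_lt_top
  have hA₂fin : A₂ ≠ ∞ := by
    refine ne_of_lt (lt_of_le_of_lt (lintegral_mono fun x => tsub_le_self) ?_)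
    rw [hIg]; exact ENNReal.one_lt_top
  have hbal : A₁ = A₂ := by
    have hpt : ∀ x, (f x - g x) + g x = (g x - f x) + f x := by
      intro x; rcases le_total (f x) (g x) with h | h
      · rw [tsub_eq_zero_of_le h, zero_add, tsub_add_cancel_of_le h]
      · rw [tsub_add_cancel_of_le h, tsub_eq_zero_of_le h, zero_add]
    have h1 : A₁ + 1 = A₂ + 1 := by
      calc A₁ + 1 = ∫⁻ x, ((f x - g x) + g x) ∂ρ := by
            rw [lintegral_add_left (f := fun x => f x - g x) (hf.sub hg), hIg]
        _ = ∫⁻ x, ((g x - f x) + f x) ∂ρ := lintegral_congr hpt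
        _ = A₂ + 1 := by rw [lintegral_add_left (f := fun x => g x - f x) (hg.sub hf), hIf]
    exact WithTop.add_right_cancel ENNReal.one_ne_top h1
  -- pointwise bound for measurable B
  have key : ∀ B : Set Y, MeasurableSet B →
      ((P₁.bind k) B).toReal - ((P₂.bind k) B).toReal ≤ A₁.toReal := by
    intro B hB
    have hkB : Measurable fun x => k x B := (Measure.measurable_coe hB).comp hk
    have e1 : (P₁.bind k) B = ∫⁻ x, f x * k x B ∂ρ := by
      rw [Measure.bind_apply hB hk.aemeasurable, ← hP₁,
        lintegral_withDensity_eq_lintegral_mul ρ hf hkB]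
      rfl
    have e2 : (P₂.bind k) B = ∫⁻ x, g x * k x B ∂ρ := by
      rw [Measure.bind_apply hB hk.aemeasurable, ← hP₂,
        lintegral_withDensity_eq_lintegral_mul ρ hg hkB]
      rfl
    have hpt : ∀ x, f x * k x B ≤ g x * k x B + (f x - g x) := by
      intro x
      have h1 : f x ≤ g x + (f x - g x) := le_add_tsub
      calc f x * k x B ≤ (g x + (f x - g x)) * k x B := mul_le_mul_left h1 _
        _ = g x * k x B + (f x - g x) * k x B := by rw [add_mul]
        _ ≤ g x * k x B + (f x - g x) * 1 := by
            have : k x B ≤ 1 := prob_le_one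
            exact add_le_add_right (mul_le_mul_right this _) _
        _ = g x * k x B + (f x - g x) := by rw [mul_one]
    have hmono : (P₁.bind k) B ≤ (P₂.bind k) B + A₁ := by
      rw [e1, e2, hA₁]
      calc ∫⁻ x, f x * k x B ∂ρ ≤ ∫⁻ x, (g x * k x B + (f x - g x)) ∂ρ := lintegral_mono hpt
        _ = (∫⁻ x, g x * k x B ∂ρ) + ∫⁻ x, (f x - g x) ∂ρ := lintegral_add_left (hg.mul hkB) _
    have hfin : (P₂.bind k) B + A₁ ≠ ∞ :=
      ENNReal.add_ne_top.2 ⟨measure_ne_top _ _, hA₁fin⟩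
    have := ENNReal.toReal_mono hfin hmono
    rw [ENNReal.toReal_add (measure_ne_top _ _) hA₁fin] at this
    linarith
  have key' : ∀ B : Set Y, MeasurableSet B →
      |((P₁.bind k) B).toReal - ((P₂.bind k) B).toReal| ≤ A₁.toReal := by
    intro B hB
    rw [abs_sub_le_iff]
    refine ⟨key B hB, ?_⟩
    -- symmetric, with A₂ = A₁
    have hkB : Measurable fun x => k x B := (Measure.measurable_coe hB).comp hk
    have e1 : (P₁.bind k) B = ∫⁻ x, f x * k x B ∂ρ := by
      rw [Measure.bind_apply hB hk.aemeasurable, ← hP₁,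
        lintegral_withDensity_eq_lintegral_mul ρ hf hkB]
      rfl
    have e2 : (P₂.bind k) B = ∫⁻ x, g x * k x B ∂ρ := by
      rw [Measure.bind_apply hB hk.aemeasurable, ← hP₂,
        lintegral_withDensity_eq_lintegral_mul ρ hg hkB]
      rfl
    have hpt : ∀ x, g x * k x B ≤ f x * k x B + (g x - f x) := by
      intro x
      have h1 : g x ≤ f x + (g x - f x) := le_add_tsub
      calc g x * k x B ≤ (f x + (g x - f x)) * k x B := mul_le_mul_left h1 _
        _ = f x * k x B + (g x - f x) * k x B := by rw [add_mul]
        _ ≤ f x * k x B + (g x - f x) * 1 := by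
            have : k x B ≤ 1 := prob_le_one
            exact add_le_add_right (mul_le_mul_right this _) _
        _ = f x * k x B + (g x - f x) := by rw [mul_one]
    have hmono : (P₂.bind k) B ≤ (P₁.bind k) B + A₂ := by
      rw [e1, e2, hA₂]
      calc ∫⁻ x, g x * k x B ∂ρ ≤ ∫⁻ x, (f x * k x B + (g x - f x)) ∂ρ := lintegral_mono hpt
        _ = (∫⁻ x, f x * k x B ∂ρ) + ∫⁻ x, (g x - f x) ∂ρ := lintegral_add_left (hf.mul hkB) _
    have hfin : (P₁.bind k) B + A₂ ≠ ∞ :=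
      ENNReal.add_ne_top.2 ⟨measure_ne_top _ _, hA₂fin⟩
    have := ENNReal.toReal_mono hfin hmono
    rw [ENNReal.toReal_add (measure_ne_top _ _) hA₂fin, ← hbal] at this
    linarith
  have h2A : 2 * A₁.toReal ≤ tv P₁ P₂ := by
    have := tv_ge_density ρ f g hf hg P₁ P₂ MeasurableSet.univ
      (fun B hB _ => by rw [← hP₁, withDensity_apply _ hB])
      (fun B hB _ => by rw [← hP₂, withDensity_apply _ hB])
    have hsum : (∫⁻ z in Set.univ, ((f z - g z) + (g z - f z)) ∂ρ).toReal
        = A₁.toReal + A₂.toReal := by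
      rw [Measure.restrict_univ, lintegral_add_left (f := fun x => f x - g x) (hf.sub hg),
        ENNReal.toReal_add hA₁fin hA₂fin]
    rw [hsum, ← hbal] at this
    linarith
  calc tv (P₁.bind k) (P₂.bind k) ≤ 2 * A₁.toReal := tv_le_of_meas key'
    _ ≤ tv P₁ P₂ := h2A

/-- `alphaK` bounds. -/
lemma ratio_le_one (Q : Kernel X Y) [IsMarkovKernel Q]
    (pr : ProbabilityMeasure X × ProbabilityMeasure X) :
    tv (kApply Q (pr.1 : Measure X)) (kApply Q (pr.2 : Measure X)) /
      tv (pr.1 : Measure X) (pr.2 : Measure X) ≤ 1 := by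
  rcases eq_or_lt_of_le (tv_nonneg (pr.1 : Measure X) (pr.2 : Measure X)) with h | h
  · rw [← h, div_zero]; norm_num
  · rw [div_le_one h]
    exact tv_bind_le _ _ _ (Kernel.measurable Q) (fun x => inferInstance)

lemma alphaK_nonneg (Q : Kernel X Y) : 0 ≤ alphaK Q :=
  Real.iSup_nonneg fun pr => div_nonneg (tv_nonneg _ _) (tv_nonneg _ _)

lemma alphaK_le_one (Q : Kernel X Y) [IsMarkovKernel Q] [Nonempty (ProbabilityMeasure X)] :
    alphaK Q ≤ 1 := ciSup_le (ratio_le_one Q)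

lemma tv_kApply_le (Q : Kernel X Y) [IsMarkovKernel Q] (μ ν : ProbabilityMeasure X) :
    tv (kApply Q (μ : Measure X)) (kApply Q (ν : Measure X))
      ≤ alphaK Q * tv (μ : Measure X) (ν : Measure X) := by
  rcases eq_or_lt_of_le (tv_nonneg (μ : Measure X) (ν : Measure X)) with h | h
  · have hdp := tv_bind_le (μ : Measure X) (ν : Measure X) (fun x => Q x)
      (Kernel.measurable Q) (fun x => inferInstance)
    rw [← h] at hdp ⊢
    rw [mul_zero]
    exact hdp
  · have hbdd : BddAbove (Set.range fun pr : ProbabilityMeasure X × ProbabilityMeasure X =>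
        tv (kApply Q (pr.1 : Measure X)) (kApply Q (pr.2 : Measure X)) /
          tv (pr.1 : Measure X) (pr.2 : Measure X)) := by
      refine ⟨1, ?_⟩; rintro x ⟨pr, rfl⟩; exact ratio_le_one Q pr
    have h1 : tv (kApply Q (μ : Measure X)) (kApply Q (ν : Measure X)) /
        tv (μ : Measure X) (ν : Measure X) ≤ alphaK Q := le_ciSup hbdd (μ, ν)
    have h2 := mul_le_mul_of_nonneg_right h1 (le_of_lt h)
    rwa [div_mul_cancel₀] at h2
    exact ne_of_gt h
end DP

/-- Core per-`y` estimate. -/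
lemma core {X : Type*} [MeasurableSpace X] (ν : Measure X) [IsProbabilityMeasure ν]
    (r f : X → ℝ≥0∞) (hr : Measurable r) (hf : Measurable f)
    (k : X → Measure X) (hk : Measurable k) (hkp : ∀ x, IsProbabilityMeasure (k x))
    (hp : ∫⁻ x, r x * f x ∂ν ≠ ∞) (hq : ∫⁻ x, f x ∂ν ≠ ∞) :
    tv ((∫⁻ x, r x * f x ∂ν)⁻¹ • ((ν.withDensity fun x => r x * f x).bind k))
       ((∫⁻ x, f x ∂ν)⁻¹ • ((ν.withDensity f).bind k))
      * (∫⁻ x, r x * f x ∂ν).toReal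
    ≤ ((∫⁻ x, ((r x * f x - f x) + (f x - r x * f x)) ∂ν)
        + ((∫⁻ x, r x * f x ∂ν - ∫⁻ x, f x ∂ν)
            + (∫⁻ x, f x ∂ν - ∫⁻ x, r x * f x ∂ν))).toReal := by
  have hrf : Measurable fun x => r x * f x := hr.mul hf
  set p : ℝ≥0∞ := ∫⁻ x, r x * f x ∂ν with hpdef
  set q : ℝ≥0∞ := ∫⁻ x, f x ∂ν with hqdef
  by_cases hp0 : p = 0
  · rw [hp0, ENNReal.toReal_zero, mul_zero]
    exact ENNReal.toReal_nonneg
  have hq0 : q ≠ 0 := by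
    intro h0
    apply hp0
    have hf0 : f =ᵐ[ν] 0 := (lintegral_eq_zero_iff hf).1 h0
    have hrf0 : (fun x => r x * f x) =ᵐ[ν] 0 := hf0.mono fun x hx => by
      simp only [Pi.zero_apply] at hx ⊢; rw [hx, mul_zero]
    rw [hpdef, lintegral_congr_ae hrf0]
    simp
  have hffin : ∀ᵐ x ∂ν, f x ≠ ∞ := (ae_lt_top hf hq).mono fun x h => h.ne
  set U : ℝ≥0∞ := ∫⁻ x, (r x * f x - f x) ∂ν with hUdef
  set V : ℝ≥0∞ := ∫⁻ x, (f x - r x * f x) ∂ν with hVdef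
  have hUle : U ≤ p := lintegral_mono fun x => tsub_le_self
  have hVle : V ≤ q := lintegral_mono fun x => tsub_le_self
  have hUfin : U ≠ ∞ := ne_top_of_le_ne_top hp hUle
  have hVfin : V ≠ ∞ := ne_top_of_le_ne_top hq hVle
  set M : Measure X := (ν.withDensity fun x => r x * f x).bind k with hMdef
  set N : Measure X := (ν.withDensity f).bind k with hNdef
  have hMuniv : M Set.univ = p := by
    rw [hMdef, Measure.bind_apply MeasurableSet.univ hk.aemeasurable]
    have h1 : ∀ x, k x Set.univ = 1 := fun x => (hkp x).measure_univ
    simp only [h1, lintegral_one]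
    rw [withDensity_apply _ MeasurableSet.univ, Measure.restrict_univ]
  have hNuniv : N Set.univ = q := by
    rw [hNdef, Measure.bind_apply MeasurableSet.univ hk.aemeasurable]
    have h1 : ∀ x, k x Set.univ = 1 := fun x => (hkp x).measure_univ
    simp only [h1, lintegral_one]
    rw [withDensity_apply _ MeasurableSet.univ, Measure.restrict_univ]
  haveI iM : IsProbabilityMeasure (p⁻¹ • M) := by
    constructor
    rw [Measure.smul_apply, hMuniv, smul_eq_mul, ENNReal.inv_mul_cancel hp0 hp]
  haveI iN : IsProbabilityMeasure (q⁻¹ • N) := by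
    constructor
    rw [Measure.smul_apply, hNuniv, smul_eq_mul, ENNReal.inv_mul_cancel hq0 hq]
  have hp' : 0 < p.toReal := ENNReal.toReal_pos hp0 hp
  have hq' : 0 < q.toReal := ENNReal.toReal_pos hq0 hq
  -- per measurable set bound
  have H : ∀ B : Set X, MeasurableSet B →
      |((p⁻¹ • M) B).toReal - ((q⁻¹ • N) B).toReal|
        ≤ ((U + V) + ((p - q) + (q - p))).toReal / (2 * p.toReal) := by
    intro B hB
    have hkB : Measurable fun x => k x B := (Measure.measurable_coe hB).comp hk
    set G : X → ℝ≥0∞ := fun x => f x * k x B with hGdef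
    have hG : Measurable G := hf.mul hkB
    have hGle : ∀ x, G x ≤ f x := fun x => by
      rw [hGdef]
      calc f x * k x B ≤ f x * 1 := mul_le_mul_right prob_le_one _
        _ = f x := mul_one _
    have hMB : M B = ∫⁻ x, r x * G x ∂ν := by
      rw [hMdef, Measure.bind_apply hB hk.aemeasurable, lintegral_withDensity_eq_lintegral_mul ν hrf hkB]
      exact lintegral_congr fun x => by simp only [Pi.mul_apply, hGdef]; ring
    have hNB : N B = ∫⁻ x, G x ∂ν := by
      rw [hNdef, Measure.bind_apply hB hk.aemeasurable, lintegral_withDensity_eq_lintegral_mul ν hf hkB]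
      rfl
    have hMBle : M B ≤ p := by
      rw [hMB, hpdef]
      exact lintegral_mono fun x => mul_le_mul_right (hGle x) _
    have hNBle : N B ≤ q := by
      rw [hNB, hqdef]
      exact lintegral_mono hGle
    have hMBfin : M B ≠ ∞ := ne_top_of_le_ne_top hp hMBle
    have hNBfin : N B ≠ ∞ := ne_top_of_le_ne_top hq hNBle
    -- four ENNReal inequalities
    have i1 : M B ≤ N B + U := by
      rw [hMB, hNB, hUdef, ← lintegral_add_left hG]
      exact lintegral_mono_ae (hffin.mono fun x hx => el1 (hGle x) hx)
    have i2 : N B ≤ M B + V := by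
      rw [hMB, hNB, hVdef, ← lintegral_add_left (f := fun x => r x * G x) (hr.mul hG)]
      exact lintegral_mono_ae (hffin.mono fun x hx => el2 (hGle x) hx)
    have i3 : M B + q ≤ N B + p + V := by
      rw [hMB, hNB, hqdef, hpdef, hVdef, ← lintegral_add_left (f := fun x => r x * G x) (hr.mul hG),
        ← lintegral_add_left hG, ← lintegral_add_left (f := fun x => G x + r x * f x) (hG.add hrf)]
      exact lintegral_mono fun x => el3 (hGle x)
    have i4 : N B + p ≤ M B + q + U := by
      rw [hMB, hNB, hqdef, hpdef, hUdef, ← lintegral_add_left hG,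
        ← lintegral_add_left (f := fun x => r x * G x) (hr.mul hG), ← lintegral_add_left (f := fun x => r x * G x + f x) ((hr.mul hG).add hf)]
      exact lintegral_mono fun x => el4 (hGle x)
    -- real versions
    have R1 : (M B).toReal ≤ (N B).toReal + U.toReal := by
      have h := ENNReal.toReal_mono (ENNReal.add_ne_top.2 ⟨hNBfin, hUfin⟩) i1
      rwa [ENNReal.toReal_add hNBfin hUfin] at h
    have R2 : (N B).toReal ≤ (M B).toReal + V.toReal := by
      have h := ENNReal.toReal_mono (ENNReal.add_ne_top.2 ⟨hMBfin, hVfin⟩) i2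
      rwa [ENNReal.toReal_add hMBfin hVfin] at h
    have R3 : (M B).toReal + q.toReal ≤ (N B).toReal + p.toReal + V.toReal := by
      have hfin : N B + p + V ≠ ∞ :=
        ENNReal.add_ne_top.2 ⟨ENNReal.add_ne_top.2 ⟨hNBfin, hp⟩, hVfin⟩
      have h := ENNReal.toReal_mono hfin i3
      rwa [ENNReal.toReal_add (ENNReal.add_ne_top.2 ⟨hNBfin, hp⟩) hVfin,
        ENNReal.toReal_add hNBfin hp, ENNReal.toReal_add hMBfin hq] at h
    have R4 : (N B).toReal + p.toReal ≤ (M B).toReal + q.toReal + U.toReal := by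
      have hfin : M B + q + U ≠ ∞ :=
        ENNReal.add_ne_top.2 ⟨ENNReal.add_ne_top.2 ⟨hMBfin, hq⟩, hUfin⟩
      have h := ENNReal.toReal_mono hfin i4
      rwa [ENNReal.toReal_add (ENNReal.add_ne_top.2 ⟨hMBfin, hq⟩) hUfin,
        ENNReal.toReal_add hMBfin hq, ENNReal.toReal_add hNBfin hp] at h
    have hrc := real_core hp' hq' ENNReal.toReal_nonneg
      (ENNReal.toReal_mono hq hNBle) ENNReal.toReal_nonneg ENNReal.toReal_nonneg
      R1 R2 R3 R4
    have hLHS : ((p⁻¹ • M) B).toReal = p.toReal⁻¹ * (M B).toReal := by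
      rw [Measure.smul_apply, smul_eq_mul, ENNReal.toReal_mul, ENNReal.toReal_inv]
    have hLHS' : ((q⁻¹ • N) B).toReal = q.toReal⁻¹ * (N B).toReal := by
      rw [Measure.smul_apply, smul_eq_mul, ENNReal.toReal_mul, ENNReal.toReal_inv]
    have hRHS : ((U + V) + ((p - q) + (q - p))).toReal
        = U.toReal + V.toReal + |p.toReal - q.toReal| := by
      have htfin : (p - q) + (q - p) ≠ ∞ :=
        ENNReal.add_ne_top.2 ⟨ne_top_of_le_ne_top hp tsub_le_self,
          ne_top_of_le_ne_top hq tsub_le_self⟩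
      rw [ENNReal.toReal_add (ENNReal.add_ne_top.2 ⟨hUfin, hVfin⟩) htfin,
        ENNReal.toReal_add hUfin hVfin]
      congr 1
      rcases le_total p q with hle | hle
      · rw [tsub_eq_zero_of_le hle, zero_add, ENNReal.toReal_sub_of_le hle hq,
          abs_of_nonpos (sub_nonpos.2 (ENNReal.toReal_mono hq hle)), neg_sub]
      · rw [tsub_eq_zero_of_le hle, add_zero, ENNReal.toReal_sub_of_le hle hp,
          abs_of_nonneg (sub_nonneg.2 (ENNReal.toReal_mono hp hle))]
    rw [hLHS, hLHS', hRHS]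
    exact hrc
  have htv := tv_le_of_meas H
  have hkey : 2 * (((U + V) + ((p - q) + (q - p))).toReal / (2 * p.toReal)) * p.toReal
      = ((U + V) + ((p - q) + (q - p))).toReal := by
    field_simp
  have hfinal := mul_le_mul_of_nonneg_right htv (le_of_lt hp')
  rw [hkey] at hfinal
  have hSsplit : ∫⁻ x, ((r x * f x - f x) + (f x - r x * f x)) ∂ν = U + V := by
    rw [hUdef, hVdef, lintegral_add_left (f := fun x => r x * f x - f x) (hrf.sub hf)]
  rw [hSsplit]
  exact hfinal


/-- Predictor stability bound for the one-step delayed information sharing pattern: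
for a true prior `μ` and false prior `ν` with `μ ≪ ν`, the expected total variation between
the updated predictors, the expectation over `y` being under the measurement distribution
induced by the true prior (with density `y ↦ ∫ h(x,y) μ(dx)` w.r.t. `ψ`), is at most
`(2 - δ(Q)) ‖μ - ν‖_TV`. -/
theorem stmt6 {X U Y : Type*} [MeasurableSpace X] [MeasurableSpace U] [MeasurableSpace Y]
    (τ : Kernel (X × U) X) [IsMarkovKernel τ] (Q : Kernel X Y) [IsMarkovKernel Q]
    (ψ : Measure Y) (h : X → Y → ℝ≥0∞) (hmeas : Measurable (Function.uncurry h))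
    (hQ : ∀ x, Q x = ψ.withDensity (h x))
    (μ ν : ProbabilityMeasure X) (hac : (μ : Measure X) ≪ (ν : Measure X)) (u : U) :
    ∫ y, tv (predUpdate τ h (μ : Measure X) u y) (predUpdate τ h (ν : Measure X) u y)
        ∂(ψ.withDensity fun y => ∫⁻ x, h x y ∂(μ : Measure X)) ≤
      (2 - dobrushin Q) * tv (μ : Measure X) (ν : Measure X) := by
  haveI : Nonempty (ProbabilityMeasure X) := ⟨μ⟩
  -- abbreviations
  set μm : Measure X := (μ : Measure X) with hμm
  set νm : Measure X := (ν : Measure X) with hνm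
  have hRHS : (2 - dobrushin Q) * tv μm νm = tv μm νm + alphaK Q * tv μm νm := by
    unfold dobrushin; ring
  rw [hRHS]
  set r : X → ℝ≥0∞ := μm.rnDeriv νm with hrdef
  have hr : Measurable r := Measure.measurable_rnDeriv _ _
  have hrweq : νm.withDensity r = μm := Measure.withDensity_rnDeriv_eq _ _ hac
  have hsec : ∀ y, Measurable fun x => h x y := fun y => hmeas.comp measurable_prodMk_right
  have hsec2 : ∀ x, Measurable fun y => h x y := fun x => hmeas.comp measurable_prodMk_left
  set p : Y → ℝ≥0∞ := fun y => ∫⁻ x, h x y ∂μm with hpdef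
  set q : Y → ℝ≥0∞ := fun y => ∫⁻ x, h x y ∂νm with hqdef
  have hpm : Measurable p := Measurable.lintegral_prod_left hmeas
  have hqm : Measurable q := Measurable.lintegral_prod_left hmeas
  have hpy : ∀ y, p y = ∫⁻ x, r x * h x y ∂νm := by
    intro y
    rw [hpdef]
    simp only
    rw [← hrweq, lintegral_withDensity_eq_lintegral_mul νm hr (hsec y)]
    rfl
  set S : Y → ℝ≥0∞ :=
    fun y => ∫⁻ x, ((r x * h x y - h x y) + (h x y - r x * h x y)) ∂νm with hSdef
  have hSm : Measurable S := by
    apply Measurable.lintegral_prod_left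
      (f := fun x y => (r x * h x y - h x y) + (h x y - r x * h x y))
    have hmeas' : Measurable fun z : X × Y => h z.1 z.2 := hmeas
    exact (((hr.comp measurable_fst).mul hmeas').sub hmeas').add
      (hmeas'.sub ((hr.comp measurable_fst).mul hmeas'))
  set t : Y → ℝ≥0∞ := fun y => (p y - q y) + (q y - p y) with htdef
  have htm : Measurable t := (hpm.sub hqm).add (hqm.sub hpm)
  set e : X → ℝ≥0∞ := fun x => (r x - 1) + (1 - r x) with hedef
  have hem : Measurable e := (hr.sub measurable_const).add (measurable_const.sub hr)
  have hQuniv : ∀ x, ∫⁻ y, h x y ∂ψ = 1 := by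
    intro x
    have h1 : Q x Set.univ = 1 := measure_univ
    rwa [hQ x, withDensity_apply _ MeasurableSet.univ, Measure.restrict_univ] at h1
  have hrint : ∫⁻ x, r x ∂νm = 1 := by
    have h1 := congrArg (fun m : Measure X => m Set.univ) hrweq
    simp only [withDensity_apply _ MeasurableSet.univ, Measure.restrict_univ] at h1
    rw [h1]; exact measure_univ
  have hEle2 : ∫⁻ x, e x ∂νm ≤ 2 := by
    calc ∫⁻ x, e x ∂νm ≤ ∫⁻ x, (r x + 1) ∂νm :=
          lintegral_mono fun x => add_le_add tsub_le_self tsub_le_self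
      _ = 1 + 1 := by rw [lintegral_add_left hr, hrint, lintegral_one, measure_univ]
      _ = 2 := by norm_num
  have hkm : Measurable fun x : X => τ (x, u) :=
    (Kernel.measurable τ).comp measurable_prodMk_right
  have hMK : ∀ x, IsProbabilityMeasure (τ (x, u)) := fun x => inferInstance
  set f₀ : Y → ℝ := fun y => tv (predUpdate τ h μm u y) (predUpdate τ h νm u y) with hf₀def
  set μY : Measure Y := ψ.withDensity p with hμYdef
  by_cases hint : Integrable f₀ μY
  swap
  · rw [integral_undef hint]
    have h1 := tv_nonneg μm νm
    have h2 := alphaK_nonneg Q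
    nlinarith
  -- the integrable case
  obtain ⟨f', hf'sm, hff'⟩ : ∃ f', StronglyMeasurable f' ∧ f₀ =ᵐ[μY] f' :=
    ⟨hint.1.mk f₀, hint.1.stronglyMeasurable_mk, hint.1.ae_eq_mk⟩
  set g' : Y → ℝ := fun y => max (f' y) 0 with hg'def
  have hg'meas : Measurable g' := hf'sm.measurable.max measurable_const
  have hfg : f₀ =ᵐ[μY] g' := by
    filter_upwards [hff'] with y hy
    rw [hg'def]; simp only
    rw [← hy]
    exact (max_eq_left (tv_nonneg _ _)).symm
  have hg0 : ∀ y, 0 ≤ g' y := fun y => le_max_right _ _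
  set W : Y → ℝ≥0∞ := fun y => p y * ENNReal.ofReal (g' y) with hWdef
  have hWm : Measurable W := hpm.mul hg'meas.ennreal_ofReal
  have hL1 : ∫ y, f₀ y ∂μY = (∫⁻ y, ENNReal.ofReal (g' y) ∂μY).toReal := by
    rw [integral_congr_ae hfg,
      integral_eq_lintegral_of_nonneg_ae (ae_of_all _ hg0) hg'meas.aestronglyMeasurable]
  have hL2 : ∫⁻ y, ENNReal.ofReal (g' y) ∂μY = ∫⁻ y, W y ∂ψ := by
    rw [hμYdef, lintegral_withDensity_eq_lintegral_mul ψ hpm hg'meas.ennreal_ofReal]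
    rfl
  have hWfin : ∫⁻ y, W y ∂ψ ≠ ∞ := by
    rw [← hL2]
    have h1 : ∫⁻ y, ENNReal.ofReal (g' y) ∂μY = ∫⁻ y, ENNReal.ofReal (f₀ y) ∂μY :=
      lintegral_congr_ae (hfg.mono fun y hy => by
        show ENNReal.ofReal (g' y) = ENNReal.ofReal (f₀ y)
        rw [hy])
    rw [h1]
    have h2 := hint.2
    rw [hasFiniteIntegral_iff_norm] at h2
    refine ne_of_lt (lt_of_le_of_lt (lintegral_mono fun y => ?_) h2)
    exact ENNReal.ofReal_le_ofReal (le_abs_self _)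
  -- the good set
  set G : Set Y := {y | W y ≠ 0} with hGdef
  have hGmeas : MeasurableSet G := (hWm (measurableSet_singleton 0)).compl
  haveI hsfG : SigmaFinite (ψ.restrict G) := by
    refine ⟨⟨⟨fun n => {y | ((n : ℝ≥0∞) + 1)⁻¹ ≤ W y} ∪ Gᶜ, fun _ => trivial, ?_, ?_⟩⟩⟩
    · intro n
      rw [Measure.restrict_apply' hGmeas]
      have hsub : ({y | ((n : ℝ≥0∞) + 1)⁻¹ ≤ W y} ∪ Gᶜ) ∩ G ⊆ {y | ((n : ℝ≥0∞) + 1)⁻¹ ≤ W y} := by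
        rintro y ⟨hy1 | hy2, hyG⟩
        · exact hy1
        · exact absurd hyG hy2
      refine lt_of_le_of_lt (measure_mono hsub) ?_
      have hmarkov := mul_meas_ge_le_lintegral₀ hWm.aemeasurable (((n : ℝ≥0∞) + 1)⁻¹) (μ := ψ)
      have hne : ((n : ℝ≥0∞) + 1)⁻¹ ≠ 0 :=
        ENNReal.inv_ne_zero.2 (ENNReal.add_ne_top.2 ⟨ENNReal.natCast_ne_top n, ENNReal.one_ne_top⟩)
      by_contra hcon
      push_neg at hcon
      have htop : ψ {y | ((n : ℝ≥0∞) + 1)⁻¹ ≤ W y} = ∞ := top_le_iff.1 hcon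
      rw [htop, ENNReal.mul_top hne] at hmarkov
      exact hWfin (top_le_iff.1 hmarkov)
    · rw [Set.eq_univ_iff_forall]
      intro y
      by_cases hy : W y = 0
      · exact Set.mem_iUnion.2 ⟨0, Or.inr fun hmem => hmem hy⟩
      · obtain ⟨n, hn⟩ := ENNReal.exists_inv_nat_lt hy
        refine Set.mem_iUnion.2 ⟨n, Or.inl ?_⟩
        have : ((n : ℝ≥0∞) + 1)⁻¹ ≤ ((n : ℝ≥0∞))⁻¹ :=
          ENNReal.inv_le_inv.2 (self_le_add_right _ _)
        exact le_trans this (le_of_lt hn)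
  -- off G, W vanishes
  have hWoff : ∀ y ∈ Gᶜ, W y = 0 := fun y hy => not_not.1 hy
  have hGoffnull : ∫⁻ y in Gᶜ, W y ∂ψ = 0 := by
    have hcong : ∫⁻ y in Gᶜ, W y ∂ψ = ∫⁻ y in Gᶜ, 0 ∂ψ :=
      setLIntegral_congr_fun hGmeas.compl hWoff
    rw [hcong, lintegral_zero]
  have hsplitW : ∫⁻ y, W y ∂ψ = ∫⁻ y in G, W y ∂ψ := by
    rw [← lintegral_add_compl W hGmeas, hGoffnull, add_zero]
  -- p > 0 on G
  have hpG : ∀ y ∈ G, p y ≠ 0 := by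
    intro y hy h0
    apply hy
    show W y = 0
    rw [hWdef]; simp only; rw [h0, zero_mul]
  -- ψ.restrict G ≪ μY
  have hacG : ψ.restrict G ≪ μY := by
    intro s hs
    rw [Measure.restrict_apply' hGmeas]
    have hs' : μY (toMeasurable μY s) = 0 := by rwa [measure_toMeasurable]
    have hmm : MeasurableSet (toMeasurable μY s) := measurableSet_toMeasurable _ _
    have h0 : ∫⁻ y in toMeasurable μY s, p y ∂ψ = 0 := by
      rwa [hμYdef, withDensity_apply _ hmm] at hs'
    have hae : ∀ᵐ y ∂(ψ.restrict (toMeasurable μY s)), p y = 0 := by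
      have := (lintegral_eq_zero_iff hpm).1 h0
      filter_upwards [this] with y hy using hy
    have h1 : ψ (toMeasurable μY s ∩ {y | p y ≠ 0}) = 0 := by
      have h2 := (ae_restrict_iff' hmm).1 hae
      rw [ae_iff] at h2
      refine measure_mono_null ?_ h2
      rintro y ⟨hy1, hy2⟩
      show ¬(y ∈ toMeasurable μY s → p y = 0)
      exact fun himp => hy2 (himp hy1)
    refine measure_mono_null ?_ h1
    rintro y ⟨hy1, hy2⟩
    exact ⟨subset_toMeasurable _ _ hy1, hpG y hy2⟩
  -- Tonelli bounds on G
  have hswap_p : ∫⁻ y in G, p y ∂ψ = ∫⁻ x, ∫⁻ y, h x y ∂(ψ.restrict G) ∂μm :=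
    (lintegral_lintegral_swap hmeas.aemeasurable).symm
  have hTon_p : ∫⁻ y in G, p y ∂ψ ≤ 1 := by
    rw [hswap_p]
    calc ∫⁻ x, ∫⁻ y, h x y ∂(ψ.restrict G) ∂μm ≤ ∫⁻ x, ∫⁻ y, h x y ∂ψ ∂μm :=
          lintegral_mono fun x => setLIntegral_le_lintegral _ _
      _ = 1 := by
          rw [lintegral_congr fun x => hQuniv x, lintegral_one, measure_univ]
  have hswap_q : ∫⁻ y in G, q y ∂ψ = ∫⁻ x, ∫⁻ y, h x y ∂(ψ.restrict G) ∂νm :=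
    (lintegral_lintegral_swap hmeas.aemeasurable).symm
  have hTon_q : ∫⁻ y in G, q y ∂ψ ≤ 1 := by
    rw [hswap_q]
    calc ∫⁻ x, ∫⁻ y, h x y ∂(ψ.restrict G) ∂νm ≤ ∫⁻ x, ∫⁻ y, h x y ∂ψ ∂νm :=
          lintegral_mono fun x => setLIntegral_le_lintegral _ _
      _ = 1 := by
          rw [lintegral_congr fun x => hQuniv x, lintegral_one, measure_univ]
  have haep : ∀ᵐ y ∂(ψ.restrict G), p y ≠ ∞ :=
    (ae_lt_top hpm (ne_top_of_le_ne_top ENNReal.one_ne_top hTon_p)).mono fun y hy => hy.ne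
  have haeq : ∀ᵐ y ∂(ψ.restrict G), q y ≠ ∞ :=
    (ae_lt_top hqm (ne_top_of_le_ne_top ENNReal.one_ne_top hTon_q)).mono fun y hy => hy.ne
  -- S bound
  have hSb : ∫⁻ y in G, S y ∂ψ ≤ ∫⁻ x, e x ∂νm := by
    have hswap_S : ∫⁻ y in G, S y ∂ψ
        = ∫⁻ x, ∫⁻ y, ((r x * h x y - h x y) + (h x y - r x * h x y)) ∂(ψ.restrict G) ∂νm := by
      refine (lintegral_lintegral_swap ?_).symm
      have hmeas' : Measurable fun z : X × Y => h z.1 z.2 := hmeas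
      exact ((((hr.comp measurable_fst).mul hmeas').sub hmeas').add
        (hmeas'.sub ((hr.comp measurable_fst).mul hmeas'))).aemeasurable
    rw [hswap_S]
    refine lintegral_mono fun x => ?_
    calc ∫⁻ y, ((r x * h x y - h x y) + (h x y - r x * h x y)) ∂(ψ.restrict G)
        ≤ ∫⁻ y, e x * h x y ∂(ψ.restrict G) := by
          refine lintegral_mono fun y => ?_
          rw [hedef]; simp only
          rw [add_mul]
          exact add_le_add (eabs1 (h x y) (r x)) (eabs2 (h x y) (r x))
      _ = e x * ∫⁻ y, h x y ∂(ψ.restrict G) := lintegral_const_mul _ (hsec2 x)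
      _ ≤ e x * ∫⁻ y, h x y ∂ψ := mul_le_mul_right (setLIntegral_le_lintegral _ _) _
      _ = e x := by rw [hQuniv x, mul_one]
  have hSGfin : ∫⁻ y in G, S y ∂ψ ≠ ∞ :=
    ne_top_of_le_ne_top (by norm_num : (2 : ℝ≥0∞) ≠ ∞) (hSb.trans hEle2)
  have haeS : ∀ᵐ y ∂(ψ.restrict G), S y ≠ ∞ :=
    (ae_lt_top hSm hSGfin).mono fun y hy => hy.ne
  -- t bound via kApply densities on G
  have hQmB : ∀ B : Set Y, MeasurableSet B → B ⊆ G →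
      kApply Q μm B = ∫⁻ y in B, p y ∂ψ := by
    intro B hB hBG
    have hrB : ψ.restrict B = (ψ.restrict G).restrict B := by
      rw [Measure.restrict_restrict hB, Set.inter_eq_self_of_subset_left hBG]
    rw [kApply, Measure.bind_apply hB (Kernel.measurable Q).aemeasurable]
    have hx : ∀ x, Q x B = ∫⁻ y in B, h x y ∂ψ := fun x => by
      rw [hQ x, withDensity_apply _ hB]
    calc ∫⁻ x, Q x B ∂μm = ∫⁻ x, ∫⁻ y, h x y ∂((ψ.restrict G).restrict B) ∂μm := by
          rw [lintegral_congr fun x => hx x]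
          rw [← hrB]
      _ = ∫⁻ y, p y ∂((ψ.restrict G).restrict B) := lintegral_lintegral_swap hmeas.aemeasurable
      _ = ∫⁻ y in B, p y ∂ψ := by rw [← hrB]
  have hQnB : ∀ B : Set Y, MeasurableSet B → B ⊆ G →
      kApply Q νm B = ∫⁻ y in B, q y ∂ψ := by
    intro B hB hBG
    have hrB : ψ.restrict B = (ψ.restrict G).restrict B := by
      rw [Measure.restrict_restrict hB, Set.inter_eq_self_of_subset_left hBG]
    rw [kApply, Measure.bind_apply hB (Kernel.measurable Q).aemeasurable]
    have hx : ∀ x, Q x B = ∫⁻ y in B, h x y ∂ψ := fun x => by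
      rw [hQ x, withDensity_apply _ hB]
    calc ∫⁻ x, Q x B ∂νm = ∫⁻ x, ∫⁻ y, h x y ∂((ψ.restrict G).restrict B) ∂νm := by
          rw [lintegral_congr fun x => hx x]
          rw [← hrB]
      _ = ∫⁻ y, q y ∂((ψ.restrict G).restrict B) := lintegral_lintegral_swap hmeas.aemeasurable
      _ = ∫⁻ y in B, q y ∂ψ := by rw [← hrB]
  haveI hQμprob : IsProbabilityMeasure (kApply Q μm) :=
    isProbabilityMeasure_bind μm _ (Kernel.measurable Q) (fun x => inferInstance)
  haveI hQνprob : IsProbabilityMeasure (kApply Q νm) :=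
    isProbabilityMeasure_bind νm _ (Kernel.measurable Q) (fun x => inferInstance)
  have hTle : (∫⁻ y in G, t y ∂ψ).toReal ≤ tv (kApply Q μm) (kApply Q νm) :=
    tv_ge_density ψ p q hpm hqm (kApply Q μm) (kApply Q νm) hGmeas hQmB hQnB
  have hTα : tv (kApply Q μm) (kApply Q νm) ≤ alphaK Q * tv μm νm := tv_kApply_le Q μ ν
  have hTGfin : ∫⁻ y in G, t y ∂ψ ≠ ∞ := by
    have hle : ∫⁻ y in G, t y ∂ψ ≤ ∫⁻ y in G, (p y + q y) ∂ψ :=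
      lintegral_mono fun y => add_le_add tsub_le_self tsub_le_self
    have h2 : ∫⁻ y in G, (p y + q y) ∂ψ = (∫⁻ y in G, p y ∂ψ) + ∫⁻ y in G, q y ∂ψ :=
      lintegral_add_left hpm _
    refine ne_top_of_le_ne_top ?_ hle
    rw [h2]
    exact ENNReal.add_ne_top.2 ⟨ne_top_of_le_ne_top ENNReal.one_ne_top hTon_p,
      ne_top_of_le_ne_top ENNReal.one_ne_top hTon_q⟩
  -- pointwise domination
  have hdom : ∀ᵐ y ∂(ψ.restrict G), W y ≤ S y + t y := by
    filter_upwards [haep, haeq, haeS, hfg.filter_mono hacG.ae_le, ae_restrict_mem hGmeas]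
      with y hpt hqt hSt hfy hyG
    have hp0 : p y ≠ 0 := hpG y hyG
    have hptt : ∫⁻ x, r x * h x y ∂νm ≠ ∞ := by rw [← hpy y]; exact hpt
    have hcore := core νm r (fun x => h x y) hr (hsec y) (fun x => τ (x, u)) hkm hMK hptt hqt
    -- identify predUpdate with the normalized bind
    have hwd : μm.withDensity (fun x => h x y) = νm.withDensity fun x => r x * h x y := by
      rw [← hrweq, ← withDensity_mul νm hr (hsec y)]
      rfl
    have hFμ : predUpdate τ h μm u y
        = (∫⁻ x, r x * h x y ∂νm)⁻¹ •
            ((νm.withDensity fun x => r x * h x y).bind fun x => τ (x, u)) := by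
      unfold predUpdate
      rw [hwd, withDensity_apply _ MeasurableSet.univ, Measure.restrict_univ]
    have hFν : predUpdate τ h νm u y
        = (∫⁻ x, h x y ∂νm)⁻¹ •
            ((νm.withDensity fun x => h x y).bind fun x => τ (x, u)) := by
      unfold predUpdate
      rw [withDensity_apply _ MeasurableSet.univ, Measure.restrict_univ]
    have h2 : f₀ y * (p y).toReal ≤ (S y + t y).toReal := by
      rw [hf₀def]; simp only
      rw [hFμ, hFν, hpy y]
      calc tv _ _ * (∫⁻ x, r x * h x y ∂νm).toReal
          ≤ ((∫⁻ x, ((r x * h x y - h x y) + (h x y - r x * h x y)) ∂νm)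
              + ((∫⁻ x, r x * h x y ∂νm - ∫⁻ x, h x y ∂νm)
                  + (∫⁻ x, h x y ∂νm - ∫⁻ x, r x * h x y ∂νm))).toReal := hcore
        _ = (S y + t y).toReal := by rw [hSdef, htdef]; simp only; rw [hpy y]
    have hZfin : S y + t y ≠ ∞ := by
      refine ENNReal.add_ne_top.2 ⟨hSt, ?_⟩
      rw [htdef]; simp only
      exact ENNReal.add_ne_top.2 ⟨ne_top_of_le_ne_top hpt tsub_le_self,
        ne_top_of_le_ne_top hqt tsub_le_self⟩
    calc W y = ENNReal.ofReal ((p y).toReal) * ENNReal.ofReal (g' y) := by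
          rw [hWdef]; simp only; rw [ENNReal.ofReal_toReal hpt]
      _ = ENNReal.ofReal ((p y).toReal * g' y) :=
          (ENNReal.ofReal_mul ENNReal.toReal_nonneg).symm
      _ ≤ ENNReal.ofReal ((S y + t y).toReal) := by
          refine ENNReal.ofReal_le_ofReal ?_
          calc (p y).toReal * g' y = f₀ y * (p y).toReal := by rw [← hfy, mul_comm]
            _ ≤ (S y + t y).toReal := h2
      _ = S y + t y := ENNReal.ofReal_toReal hZfin
  -- final chain
  have hmain : ∫⁻ y in G, W y ∂ψ ≤ (∫⁻ y in G, S y ∂ψ) + ∫⁻ y in G, t y ∂ψ := by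
    calc ∫⁻ y in G, W y ∂ψ ≤ ∫⁻ y in G, (S y + t y) ∂ψ := lintegral_mono_ae hdom
      _ = _ := lintegral_add_left hSm _
  have hSle : (∫⁻ y in G, S y ∂ψ).toReal ≤ tv μm νm := by
    have h1 : (∫⁻ y in G, S y ∂ψ).toReal ≤ (∫⁻ x, e x ∂νm).toReal :=
      ENNReal.toReal_mono (ne_top_of_le_ne_top (by norm_num : (2:ℝ≥0∞) ≠ ∞) hEle2) hSb
    have h2 : (∫⁻ x, e x ∂νm).toReal ≤ tv μm νm := by
      have h3 := tv_ge_density νm r (fun _ => 1) hr measurable_const μm νm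
        MeasurableSet.univ
        (fun B hB _ => by rw [← hrweq, withDensity_apply _ hB])
        (fun B hB _ => (setLIntegral_one B).symm)
      rw [Measure.restrict_univ] at h3
      exact h3
    exact le_trans h1 h2
  calc ∫ y, f₀ y ∂μY = (∫⁻ y in G, W y ∂ψ).toReal := by rw [hL1, hL2, hsplitW]
    _ ≤ ((∫⁻ y in G, S y ∂ψ) + ∫⁻ y in G, t y ∂ψ).toReal :=
        ENNReal.toReal_mono (ENNReal.add_ne_top.2 ⟨hSGfin, hTGfin⟩) hmain
    _ = (∫⁻ y in G, S y ∂ψ).toReal + (∫⁻ y in G, t y ∂ψ).toReal :=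
        ENNReal.toReal_add hSGfin hTGfin
    _ ≤ tv μm νm + alphaK Q * tv μm νm := add_le_add hSle (le_trans hTle hTα)
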